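/- Assume σ_min(A) > 1 with μ = σ_min(A)² - 1, L₁ = ‖A+I‖, L₂ = ‖A-I‖, and let x* solve Ax - |x| - b = 0. Then for every x ∈ ℝⁿ and every exponent λ ∈ (0,1]: (1/‖r(x)‖^{1-λ}) ⟨x - x*, Aᵀ r(x)⟩ ≥ (μ²/(2(L₁+L₂)^{3-λ})) ‖x - x*‖^{1+λ} whenever r(x) ≠ 0. -/

import Mathlib

open Matrix
open scoped BigOperators

/-- Euclidean norm of a vector in ℝⁿ. -/
noncomputable def evnorm {n : ℕ} (x : Fin n → ℝ) : ℝ := Real.sqrt (∑ i, x i ^ 2)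

/-- Componentwise absolute value. -/
def vabs {n : ℕ} (x : Fin n → ℝ) : Fin n → ℝ := fun i => |x i|

/-- Spectral norm: sup of ‖Ax‖ over unit vectors x. -/
noncomputable def specNorm {n : ℕ} (A : Matrix (Fin n) (Fin n) ℝ) : ℝ :=
  sSup {c : ℝ | ∃ x : Fin n → ℝ, evnorm x = 1 ∧ c = evnorm (A *ᵥ x)}

/-- Smallest singular value: inf of ‖Ax‖ over unit vectors x. -/
noncomputable def sigmaMin {n : ℕ} (A : Matrix (Fin n) (Fin n) ℝ) : ℝ :=
  sInf {c : ℝ | ∃ x : Fin n → ℝ, evnorm x = 1 ∧ c = evnorm (A *ᵥ x)}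

open scoped RealInnerProductSpace
set_option synthInstance.maxHeartbeats 1000000
set_option maxHeartbeats 1000000


noncomputable def toE {n : ℕ} (x : Fin n → ℝ) : EuclideanSpace ℝ (Fin n) :=
  (WithLp.equiv 2 (Fin n → ℝ)).symm x


lemma evnorm_eq_norm {n : ℕ} (x : Fin n → ℝ) : evnorm x = ‖toE x‖ := by
  rw [EuclideanSpace.norm_eq]
  simp [evnorm, toE, sq_abs]

example {n : ℕ} (x y : Fin n → ℝ) : toE (x + y) = toE x + toE y := rfl
example {n : ℕ} (x y : Fin n → ℝ) : toE (x - y) = toE x - toE y := rfl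
example {n : ℕ} (c : ℝ) (x : Fin n → ℝ) : toE (c • x) = c • toE x := rfl

lemma dot_eq_inner {n : ℕ} (x y : Fin n → ℝ) : x ⬝ᵥ y = ⟪toE x, toE y⟫ := by
  simp [dotProduct, toE, PiLp.inner_apply, RCLike.inner_apply, mul_comm]

lemma evnorm_nonneg {n : ℕ} (x : Fin n → ℝ) : 0 ≤ evnorm x := by
  rw [evnorm_eq_norm]; exact norm_nonneg _

lemma evnorm_pos {n : ℕ} {x : Fin n → ℝ} (hx : x ≠ 0) : 0 < evnorm x := by
  rw [evnorm_eq_norm]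
  exact norm_pos_iff.mpr (fun h => hx (by have h' := congrArg (WithLp.equiv 2 (Fin n → ℝ)) h; simpa [toE] using h'))

lemma evnorm_triangle {n : ℕ} (x y : Fin n → ℝ) : evnorm (x + y) ≤ evnorm x + evnorm y := by
  simp only [evnorm_eq_norm]; exact norm_add_le _ _

lemma evnorm_smul {n : ℕ} (c : ℝ) (x : Fin n → ℝ) : evnorm (c • x) = |c| * evnorm x := by
  simp only [evnorm_eq_norm]
  show ‖c • toE x‖ = _
  rw [norm_smul, Real.norm_eq_abs]

lemma dot_le {n : ℕ} (x y : Fin n → ℝ) : x ⬝ᵥ y ≤ evnorm x * evnorm y := by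
  rw [dot_eq_inner, evnorm_eq_norm, evnorm_eq_norm]; exact real_inner_le_norm _ _

lemma dot_self {n : ℕ} (x : Fin n → ℝ) : x ⬝ᵥ x = evnorm x ^ 2 := by
  rw [dot_eq_inner, evnorm_eq_norm]; exact real_inner_self_eq_norm_sq _

lemma existsBound {n : ℕ} (A : Matrix (Fin n) (Fin n) ℝ) :
    ∃ C : ℝ, 0 ≤ C ∧ ∀ x : Fin n → ℝ, evnorm (A *ᵥ x) ≤ C * evnorm x := by
  let T := LinearMap.toContinuousLinearMap (Matrix.toEuclideanLin A)
  refine ⟨‖T‖, norm_nonneg _, fun x => ?_⟩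
  have h := T.le_opNorm (toE x)
  have : T (toE x) = toE (A *ᵥ x) := by
    show Matrix.toEuclideanLin A (toE x) = _
    simp [Matrix.toEuclideanLin, toE]
  rw [this] at h
  simpa [evnorm_eq_norm] using h



lemma spec_bddAbove {n : ℕ} (A : Matrix (Fin n) (Fin n) ℝ) :
    BddAbove {c : ℝ | ∃ x : Fin n → ℝ, evnorm x = 1 ∧ c = evnorm (A *ᵥ x)} := by
  obtain ⟨C, hC0, hC⟩ := existsBound A
  exact ⟨C, by rintro c ⟨x, hx, rfl⟩; simpa [hx] using hC x⟩

lemma sig_bddBelow {n : ℕ} (A : Matrix (Fin n) (Fin n) ℝ) :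
    BddBelow {c : ℝ | ∃ x : Fin n → ℝ, evnorm x = 1 ∧ c = evnorm (A *ᵥ x)} :=
  ⟨0, by rintro c ⟨x, hx, rfl⟩; exact evnorm_nonneg _⟩

lemma le_specNorm {n : ℕ} (A : Matrix (Fin n) (Fin n) ℝ) {x : Fin n → ℝ} (hx : evnorm x = 1) :
    evnorm (A *ᵥ x) ≤ specNorm A :=
  le_csSup (spec_bddAbove A) ⟨x, hx, rfl⟩

lemma sigmaMin_le {n : ℕ} (A : Matrix (Fin n) (Fin n) ℝ) {x : Fin n → ℝ} (hx : evnorm x = 1) :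
    sigmaMin A ≤ evnorm (A *ᵥ x) :=
  csInf_le (sig_bddBelow A) ⟨x, hx, rfl⟩

lemma unit_vec {n : ℕ} {x : Fin n → ℝ} (hx : x ≠ 0) :
    evnorm ((evnorm x)⁻¹ • x) = 1 := by
  have h := evnorm_pos hx
  rw [evnorm_smul, abs_of_pos (inv_pos.mpr h), inv_mul_cancel₀ h.ne']

lemma sig_mul_le {n : ℕ} (A : Matrix (Fin n) (Fin n) ℝ) (x : Fin n → ℝ) :
    sigmaMin A * evnorm x ≤ evnorm (A *ᵥ x) := by
  by_cases hx : x = 0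
  · simp [hx, evnorm, Matrix.mulVec_zero]
  · have h := evnorm_pos hx
    have := sigmaMin_le A (unit_vec hx)
    rw [Matrix.mulVec_smul, evnorm_smul, abs_of_pos (inv_pos.mpr h)] at this
    calc sigmaMin A * evnorm x ≤ ((evnorm x)⁻¹ * evnorm (A *ᵥ x)) * evnorm x := by
          nlinarith
      _ = evnorm (A *ᵥ x) := by field_simp

lemma evnorm_mono {n : ℕ} {x y : Fin n → ℝ} (h : ∀ i, |x i| ≤ |y i|) :
    evnorm x ≤ evnorm y := by
  apply Real.sqrt_le_sqrt
  apply Finset.sum_le_sum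
  intro i _
  rw [← sq_abs (x i), ← sq_abs (y i)]
  exact pow_le_pow_left₀ (abs_nonneg _) (h i) 2

lemma evnorm_single {m : ℕ} : evnorm (Pi.single (0 : Fin (m+1)) (1:ℝ)) = 1 := by
  set x₀ : Fin (m+1) → ℝ := Pi.single 0 1 with hx₀
  have : (∑ i, x₀ i ^ 2) = 1 := by
    simp [hx₀, Pi.single_apply, apply_ite (· ^ 2)]
  rw [evnorm, this, Real.sqrt_one]

lemma sig_zero (A : Matrix (Fin 0) (Fin 0) ℝ) : sigmaMin A = 0 := by
  rw [sigmaMin]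
  convert Real.sInf_empty using 2
  ext c
  simp only [Set.mem_setOf_eq, Set.mem_empty_iff_false, iff_false]
  rintro ⟨x, hx, -⟩
  simp [evnorm, Finset.univ_eq_empty] at hx


lemma spec_mul_le {n : ℕ} (A : Matrix (Fin n) (Fin n) ℝ) (x : Fin n → ℝ) :
    evnorm (A *ᵥ x) ≤ specNorm A * evnorm x := by
  by_cases hx : x = 0
  · simp [hx, evnorm, Matrix.mulVec_zero]
  · have h := evnorm_pos hx
    have h2 := le_specNorm A (unit_vec hx)
    rw [Matrix.mulVec_smul, evnorm_smul, abs_of_pos (inv_pos.mpr h)] at h2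
    calc evnorm (A *ᵥ x) = ((evnorm x)⁻¹ * evnorm (A *ᵥ x)) * evnorm x := by field_simp
      _ ≤ specNorm A * evnorm x := by nlinarith [evnorm_nonneg (A *ᵥ x)]

theorem stmt10 {n : ℕ} (A : Matrix (Fin n) (Fin n) ℝ) (b : Fin n → ℝ)
    (hA : 1 < sigmaMin A)
    (xs : Fin n → ℝ) (hxs : A *ᵥ xs - vabs xs - b = 0)
    (lam : ℝ) (hlam : lam ∈ Set.Ioc (0 : ℝ) 1) :
    ∀ x : Fin n → ℝ, A *ᵥ x - vabs x - b ≠ 0 →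
      (sigmaMin A ^ 2 - 1) ^ (2 : ℕ) /
          (2 * (specNorm (A + 1) + specNorm (A - 1)) ^ (3 - lam)) *
        evnorm (x - xs) ^ (1 + lam) ≤
      (1 / evnorm (A *ᵥ x - vabs x - b) ^ (1 - lam)) *
        ((x - xs) ⬝ᵥ (Aᵀ *ᵥ (A *ᵥ x - vabs x - b))) := by
  intro x hr0
  obtain ⟨hlam0, hlam1⟩ := hlam
  cases n with
  | zero => exact absurd hA (by rw [sig_zero]; norm_num)
  | succ m =>
  set σ := sigmaMin A with hσdef
  have hσ : 1 < σ := hA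
  set L1 := specNorm (A + 1) with hL1def
  set L2 := specNorm (A - 1) with hL2def
  set L := L1 + L2 with hLdef
  set x₀ : Fin (m+1) → ℝ := Pi.single 0 1 with hx₀
  have hx₀1 : evnorm x₀ = 1 := evnorm_single
  have hhalf : ∀ y : Fin (m+1) → ℝ, evnorm (A *ᵥ y) ≤ (L/2) * evnorm y := by
    intro y
    have h1 : (A + 1) *ᵥ y = A *ᵥ y + y := by rw [Matrix.add_mulVec, Matrix.one_mulVec]
    have h2 : (A - 1) *ᵥ y = A *ᵥ y - y := by rw [Matrix.sub_mulVec, Matrix.one_mulVec]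
    have key : (2:ℝ) • (A *ᵥ y) = (A+1) *ᵥ y + (A-1) *ᵥ y := by rw [h1, h2]; module
    have htri := evnorm_triangle ((A+1) *ᵥ y) ((A-1) *ᵥ y)
    rw [← key, evnorm_smul] at htri
    have e1 : evnorm ((A+1) *ᵥ y) ≤ L1 * evnorm y := spec_mul_le _ _
    have e2 : evnorm ((A-1) *ᵥ y) ≤ L2 * evnorm y := spec_mul_le _ _
    rw [abs_of_pos (by norm_num : (0:ℝ) < 2)] at htri
    rw [hLdef]; linarith
  have hLσ : 2*σ ≤ L := by
    have h1 := hhalf x₀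
    have h2 := sigmaMin_le A hx₀1
    rw [hx₀1, mul_one] at h1
    rw [← hσdef] at h2
    linarith
  have hLpos : (0:ℝ) < L := by linarith
  have hL2 : (2:ℝ) < L := by linarith
  set r := A *ᵥ x - vabs x - b with hrdef
  set e := x - xs with hedef
  set d := vabs x - vabs xs with hddef
  have hre : r = A *ᵥ e - d := by
    have hb : A *ᵥ xs - vabs xs = b := by rwa [sub_eq_zero] at hxs
    rw [hrdef, hedef, hddef, Matrix.mulVec_sub, ← hb]; abel
  have he0 : e ≠ 0 := by
    intro h
    apply hr0
    have hxx : x = xs := by rwa [hedef, sub_eq_zero] at h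
    rw [hrdef, hxx]; exact hxs
  have hE : 0 < evnorm e := evnorm_pos he0
  have hR : 0 < evnorm r := evnorm_pos hr0
  have hD : evnorm d ≤ evnorm e := by
    apply evnorm_mono
    intro i
    rw [hddef, hedef]
    simpa [vabs] using abs_abs_sub_abs_le_abs_sub (x i) (xs i)
  have hU : σ * evnorm e ≤ evnorm (A *ᵥ e) := sig_mul_le A e
  have hUE : evnorm e ≤ evnorm (A *ᵥ e) := le_trans (by nlinarith) hU
  have hUhalf : evnorm (A *ᵥ e) ≤ (L/2) * evnorm e := hhalf e
  have hP : e ⬝ᵥ (Aᵀ *ᵥ r) = (A *ᵥ e) ⬝ᵥ r := by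
    rw [Matrix.dotProduct_mulVec, Matrix.vecMul_transpose, dotProduct_comm]
  have hiden : 2 * ((A *ᵥ e) ⬝ᵥ r) = evnorm (A *ᵥ e)^2 + evnorm r ^2 - evnorm d ^2 := by
    have h1 : d = A *ᵥ e - r := by rw [hre]; abel
    have h2 : d ⬝ᵥ d = (A *ᵥ e) ⬝ᵥ (A *ᵥ e) - 2 * ((A *ᵥ e) ⬝ᵥ r) + r ⬝ᵥ r := by
      rw [h1]
      simp only [sub_dotProduct, dotProduct_sub]
      rw [dotProduct_comm r (A *ᵥ e)]
      ring
    rw [dot_self, dot_self, dot_self] at h2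
    linarith
  have hP2 : evnorm r ^ 2 / 2 ≤ (A *ᵥ e) ⬝ᵥ r := by
    have hUD : evnorm d ^ 2 ≤ evnorm (A *ᵥ e) ^ 2 := by
      nlinarith [evnorm_nonneg d]
    linarith
  have hcross : (A *ᵥ e - d) ⬝ᵥ (A *ᵥ e + d) = evnorm (A *ᵥ e)^2 - evnorm d^2 := by
    simp only [sub_dotProduct, dotProduct_add]
    rw [dotProduct_comm d (A *ᵥ e), dot_self, dot_self]
    ring
  have hsum : evnorm (A *ᵥ e + d) ≤ L * evnorm e := by
    calc evnorm (A *ᵥ e + d) ≤ evnorm (A *ᵥ e) + evnorm d := evnorm_triangle _ _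
      _ ≤ (L/2)*evnorm e + evnorm e := by linarith
      _ ≤ L * evnorm e := by nlinarith
  have hmuE : (σ^2 - 1) * evnorm e ≤ L * evnorm r := by
    have h1 : (σ^2-1) * evnorm e^2 ≤ evnorm (A *ᵥ e)^2 - evnorm d^2 := by
      have q1 : (σ * evnorm e)*(σ * evnorm e) ≤ evnorm (A *ᵥ e) * evnorm (A *ᵥ e) :=
        mul_self_le_mul_self (by positivity) hU
      have q2 : evnorm d * evnorm d ≤ evnorm e * evnorm e :=
        mul_self_le_mul_self (evnorm_nonneg d) hD
      nlinarith [q1, q2]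
    have h2 : evnorm (A *ᵥ e)^2 - evnorm d^2 ≤ evnorm r * (L * evnorm e) := by
      rw [← hcross]
      calc (A *ᵥ e - d) ⬝ᵥ (A *ᵥ e + d) = r ⬝ᵥ (A *ᵥ e + d) := by rw [hre]
        _ ≤ evnorm r * evnorm (A *ᵥ e + d) := dot_le _ _
        _ ≤ evnorm r * (L * evnorm e) := by nlinarith
    apply le_of_mul_le_mul_right _ hE
    nlinarith
  have hmuL : σ^2 - 1 ≤ L^2 := by nlinarith
  set E := evnorm e with hEdef
  set R := evnorm r with hRdef
  set μ := σ^2 - 1 with hμdef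
  have hμpos : 0 < μ := by rw [hμdef]; nlinarith
  rw [hP]
  have hQ : R ^ (1+lam) / 2 ≤ (1 / R^(1-lam)) * ((A *ᵥ e) ⬝ᵥ r) := by
    have hpow : (0:ℝ) < R^(1-lam) := Real.rpow_pos_of_pos hR _
    have h2 : R ^ (1+lam) = R ^ (2:ℕ) / R^(1-lam) := by
      rw [← Real.rpow_natCast R 2, ← Real.rpow_sub hR]
      norm_num
      congr 1
      ring
    rw [h2]
    calc R^(2:ℕ)/R^(1-lam)/2 = (1/R^(1-lam)) * (R^(2:ℕ)/2) := by ring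
      _ ≤ _ := by
        apply mul_le_mul_of_nonneg_left _ (by positivity)
        exact_mod_cast hP2
  have h1lam : (0:ℝ) ≤ 1 + lam := by linarith
  have hkey : μ^(2:ℕ) * E^(1+lam) ≤ L^(3-lam) * R^(1+lam) := by
    have ha : (μ*E)^(1+lam) ≤ (L*R)^(1+lam) :=
      Real.rpow_le_rpow (by positivity) hmuE h1lam
    rw [Real.mul_rpow hμpos.le hE.le, Real.mul_rpow hLpos.le hR.le] at ha
    have hb : μ^(1-lam) ≤ (L^(2:ℕ))^(1-lam) :=
      Real.rpow_le_rpow hμpos.le hmuL (by linarith)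
    have hb2 : ((L:ℝ)^(2:ℕ))^(1-lam) = L^(2-2*lam) := by
      rw [← Real.rpow_natCast L 2, ← Real.rpow_mul hLpos.le]
      norm_num
      ring_nf
    have hmu2 : μ^(2:ℕ) = μ^(1-lam) * μ^(1+lam) := by
      rw [← Real.rpow_natCast μ 2, ← Real.rpow_add hμpos]; norm_num
    have hL3 : L^(3-lam) = L^(2-2*lam) * L^(1+lam) := by
      rw [← Real.rpow_add hLpos]; ring_nf
    rw [hmu2, hL3, mul_assoc, mul_assoc]
    exact mul_le_mul (hb.trans_eq hb2) ha (by positivity) (by positivity)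
  have hLpow : (0:ℝ) < L^(3-lam) := Real.rpow_pos_of_pos hLpos _
  calc μ^(2:ℕ)/(2*L^(3-lam)) * E^(1+lam) = (μ^(2:ℕ) * E^(1+lam))/(2*L^(3-lam)) := by ring
    _ ≤ (L^(3-lam) * R^(1+lam))/(2*L^(3-lam)) := by
        apply div_le_div_of_nonneg_right hkey (by positivity)
    _ = R^(1+lam)/2 := by field_simp
    _ ≤ _ := hQ
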